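/- arXiv:math/0609426 — 4 statements merged into one kernel-verified Lean document; each statement's English description precedes it below -/
import Mathlib

section
/- Let q be a prime power and A ⊆ F_q with |A+A| = m₁ and |A·A| = m₂. Then |A|³ ≤ C(q⁻¹ m₁² m₂ |A| + q^{1/2} m₁ m₂) for some absolute constant C. -/
/-!
Count the incidences between the points `A⁻¹ × (A + A)` and the lines `y = s x + c` with
`s ∈ A * A`, `c ∈ A`. Each `(a, b, c)` with `a ∈ A \ {0}` and `b, c ∈ A` gives the incidence
`(a b) a⁻¹ + c = b + c`, so there are at least `|A|³ - |A|²` of them.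

Conversely, expand the number of solutions of `s x + c = u` in additive characters. The trivial
character contributes `|S||X||C||U| / q`. For `ψ ≠ 0` the maps `ψ(s ·)`, `s ∈ F`, run over all
characters, so Cauchy–Schwarz and Parseval bound `|∑_{s ∈ S, x ∈ X} ψ(s x)|` by `√(q |S||X|)`,
and Cauchy–Schwarz and Parseval again bound the remaining sum over `ψ` of `|Ĉ(ψ)||Û(ψ)|` by
`q √(|C||U|)`. This gives Vinh's bound `|S||X||C||U| / q + √(q |S||X||C||U|)`, and comparing
the two estimates with `|A| ≤ |A + A|, |A * A|` yields the theorem with constant `2`.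
-/

open Finset Pointwise
open scoped ComplexConjugate

namespace AddChar

variable {G : Type*} [AddCommGroup G] [Fintype G]

lemma mul_conj_sum_eq_sum_sum_sub (ψ : AddChar G ℂ) (C D : Finset G) :
    (∑ c ∈ C, ψ c) * conj (∑ d ∈ D, ψ d) = ∑ c ∈ C, ∑ d ∈ D, ψ (c - d) := by
  simp only [map_sum, sum_mul_sum, ← map_neg_eq_conj, ← map_add_eq_mul, sub_eq_add_neg]

lemma sum_norm_sq_sum_eq (C : Finset G) :
    ∑ ψ : AddChar G ℂ, ‖∑ c ∈ C, ψ c‖ ^ 2 = Fintype.card G * #C := by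
  classical
  apply Complex.ofReal_injective
  calc ((∑ ψ : AddChar G ℂ, ‖∑ c ∈ C, ψ c‖ ^ 2 : ℝ) : ℂ)
      = ∑ ψ : AddChar G ℂ, ∑ c ∈ C, ∑ d ∈ C, ψ (c - d) := by
        push_cast
        simp only [← Complex.mul_conj', mul_conj_sum_eq_sum_sum_sub]
    _ = ∑ c ∈ C, ∑ d ∈ C, ∑ ψ : AddChar G ℂ, ψ (c - d) := by
        rw [sum_comm]; exact sum_congr rfl fun _ _ ↦ sum_comm
    _ = ((Fintype.card G * #C : ℝ) : ℂ) := by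
        simp [sum_apply_eq_ite, sub_eq_zero, mul_comm]

variable [DecidableEq G]

lemma card_mul_card_filter_add_eq_sum {ι : Type*} (P : Finset ι) (f : ι → G) (C U : Finset G) :
    (Fintype.card G : ℂ) * #{t ∈ P ×ˢ C ×ˢ U | f t.1 + t.2.1 = t.2.2} =
      ∑ ψ : AddChar G ℂ, (∑ p ∈ P, ψ (f p)) * ((∑ c ∈ C, ψ c) * conj (∑ u ∈ U, ψ u)) := by
  calc (Fintype.card G : ℂ) * #{t ∈ P ×ˢ C ×ˢ U | f t.1 + t.2.1 = t.2.2}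
      = ∑ t ∈ P ×ˢ C ×ˢ U, ∑ ψ : AddChar G ℂ, ψ (f t.1 + (t.2.1 - t.2.2)) := by
        rw [card_filter, Nat.cast_sum, mul_sum]
        refine sum_congr rfl fun t _ ↦ ?_
        simp only [sum_apply_eq_ite, ← add_sub_assoc, sub_eq_zero]
        split_ifs <;> simp
    _ = _ := by
        rw [sum_comm]
        simp only [sum_product, mul_conj_sum_eq_sum_sum_sub]
        simp only [sum_mul]
        simp only [mul_sum, map_add_eq_mul]

lemma card_mul_card_filter_add_le {ι : Type*} (P : Finset ι) (f : ι → G) (C U : Finset G)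
    {M : ℝ} (hM₀ : 0 ≤ M) (hM : ∀ ψ : AddChar G ℂ, ψ ≠ 0 → ‖∑ p ∈ P, ψ (f p)‖ ≤ M) :
    (Fintype.card G : ℝ) * #{t ∈ P ×ˢ C ×ˢ U | f t.1 + t.2.1 = t.2.2} ≤
      #P * #C * #U + M * (√(Fintype.card G * #C) * √(Fintype.card G * #U)) := by
  set B : AddChar G ℂ → ℝ := fun ψ ↦ ‖∑ c ∈ C, ψ c‖ * ‖∑ u ∈ U, ψ u‖
  calc (Fintype.card G : ℝ) * #{t ∈ P ×ˢ C ×ˢ U | f t.1 + t.2.1 = t.2.2}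
      = ‖∑ ψ : AddChar G ℂ, (∑ p ∈ P, ψ (f p)) * ((∑ c ∈ C, ψ c) * conj (∑ u ∈ U, ψ u))‖ := by
        rw [← card_mul_card_filter_add_eq_sum]; simp
    _ ≤ ∑ ψ : AddChar G ℂ, ‖∑ p ∈ P, ψ (f p)‖ * B ψ := by
        refine (norm_sum_le _ _).trans_eq ?_
        simp only [norm_mul, Complex.norm_conj, B]
    _ = #P * #C * #U + ∑ ψ ∈ univ.erase 0, ‖∑ p ∈ P, ψ (f p)‖ * B ψ := by
        rw [← add_sum_erase _ _ (mem_univ 0)]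
        simp [B, mul_assoc]
    _ ≤ #P * #C * #U + ∑ ψ ∈ univ.erase 0, M * B ψ := by
        gcongr with ψ hψ
        exact hM ψ (ne_of_mem_erase hψ)
    _ ≤ #P * #C * #U + M * ∑ ψ, B ψ := by
        rw [← mul_sum]
        gcongr
        exact erase_subset _ _
    _ ≤ #P * #C * #U + M * (√(∑ ψ : AddChar G ℂ, ‖∑ c ∈ C, ψ c‖ ^ 2) *
          √(∑ ψ : AddChar G ℂ, ‖∑ u ∈ U, ψ u‖ ^ 2)) := by
        gcongr
        exact Real.sum_mul_le_sqrt_mul_sqrt _ _ _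
    _ = _ := by rw [sum_norm_sq_sum_eq, sum_norm_sq_sum_eq]

end AddChar

section Field

variable {F : Type*} [Field F]

namespace AddChar

variable [Fintype F]

lemma bijective_mulShift {ψ : AddChar F ℂ} (hψ : ψ ≠ 0) : Function.Bijective ψ.mulShift :=
  (Fintype.bijective_iff_injective_and_card _).2
    ⟨to_mulShift_inj_of_isPrimitive (IsPrimitive.of_ne_one hψ), card_eq.symm⟩

lemma sum_norm_sq_sum_mul_eq {ψ : AddChar F ℂ} (hψ : ψ ≠ 0) (X : Finset F) :
    ∑ s : F, ‖∑ x ∈ X, ψ (s * x)‖ ^ 2 = Fintype.card F * #X := by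
  simpa using (bijective_mulShift hψ).sum_comp (fun φ ↦ ‖∑ x ∈ X, φ x‖ ^ 2)
    |>.trans (sum_norm_sq_sum_eq X)

lemma norm_sum_sum_mul_le {ψ : AddChar F ℂ} (hψ : ψ ≠ 0) (S X : Finset F) :
    ‖∑ s ∈ S, ∑ x ∈ X, ψ (s * x)‖ ≤ √(#S * (Fintype.card F * #X)) := by
  calc ‖∑ s ∈ S, ∑ x ∈ X, ψ (s * x)‖ ≤ ∑ s ∈ S, ‖∑ x ∈ X, ψ (s * x)‖ := norm_sum_le _ _
    _ ≤ √(#S * ∑ s ∈ S, ‖∑ x ∈ X, ψ (s * x)‖ ^ 2) :=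
        Real.le_sqrt_of_sq_le sq_sum_le_card_mul_sum_sq
    _ ≤ √(#S * ∑ s : F, ‖∑ x ∈ X, ψ (s * x)‖ ^ 2) := by
        gcongr
        exact subset_univ S
    _ = √(#S * (Fintype.card F * #X)) := by rw [sum_norm_sq_sum_mul_eq hψ]

end AddChar

variable [DecidableEq F]

/-- The number of incidences between the points `X ×ˢ U` and the lines `y = s * x + c` with
`(s, c) ∈ S ×ˢ C`. -/
def incidences (S X C U : Finset F) : ℕ :=
  #{t ∈ (S ×ˢ X) ×ˢ C ×ˢ U | t.1.1 * t.1.2 + t.2.1 = t.2.2}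

lemma card_pow_three_le_incidences (A : Finset F) :
    #A ^ 3 ≤ incidences (A * A) A⁻¹ A (A + A) + #A ^ 2 := by
  have hinj : #(A.erase 0) * (#A * #A) ≤ incidences (A * A) A⁻¹ A (A + A) := by
    rw [← card_product, ← card_product]
    refine card_le_card_of_injOn (fun t ↦ ((t.1 * t.2.1, t.1⁻¹), t.2.2, t.2.1 + t.2.2)) ?_ ?_
    · rintro ⟨a, b, c⟩ ht
      simp only [coe_product, Set.mem_prod, mem_coe] at ht
      obtain ⟨ha, hb, hc⟩ := ht
      simp only [mem_coe, mem_filter, mem_product]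
      refine ⟨⟨⟨mul_mem_mul (mem_of_mem_erase ha) hb, inv_mem_inv (mem_of_mem_erase ha)⟩, hc,
        add_mem_add hb hc⟩, ?_⟩
      field_simp [ne_of_mem_erase ha]
    · rintro ⟨a, b, c⟩ ha ⟨a', b', c'⟩ - h
      simp only [Prod.mk.injEq, inv_inj] at h
      obtain ⟨⟨hab, rfl⟩, rfl, -⟩ := h
      rw [mul_left_cancel₀ (ne_of_mem_erase (mem_product.1 ha).1) hab]
  calc #A ^ 3 = #A * (#A * #A) := by ring
    _ ≤ (#(A.erase 0) + 1) * (#A * #A) :=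
        Nat.mul_le_mul_right _ (tsub_le_iff_right.1 pred_card_le_card_erase)
    _ = #(A.erase 0) * (#A * #A) + #A ^ 2 := by ring
    _ ≤ incidences (A * A) A⁻¹ A (A + A) + #A ^ 2 := by gcongr

lemma incidences_le [Fintype F] (S X C U : Finset F) :
    (incidences S X C U : ℝ) ≤
      #S * #X * #C * #U / Fintype.card F + √(Fintype.card F * (#S * #X * #C * #U)) := by
  set q : ℝ := (Fintype.card F : ℝ)
  have hq : 0 < q := Nat.cast_pos.2 Fintype.card_pos
  have hcount := AddChar.card_mul_card_filter_add_le (S ×ˢ X) (fun p ↦ p.1 * p.2) C U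
    (Real.sqrt_nonneg _) fun ψ hψ ↦ by
      simpa only [sum_product] using AddChar.norm_sum_sum_mul_le hψ S X
  have hsqrt : √(#S * (q * #X)) * (√(q * #C) * √(q * #U)) =
      q * √(q * (#S * #X * #C * #U)) := by
    rw [← Real.sqrt_mul (by positivity), ← Real.sqrt_mul (by positivity),
      show (#S : ℝ) * (q * #X) * (q * #C * (q * #U)) = q ^ 2 * (q * (#S * #X * #C * #U)) by ring,
      Real.sqrt_mul (by positivity), Real.sqrt_sq hq.le]
  rw [hsqrt, card_product] at hcount
  rw [incidences, div_add' _ _ _ hq.ne', le_div_iff₀ hq]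
  push_cast at hcount
  linarith

end Field

lemma cube_le_of_incidence_bounds {q a m₁ m₂ N : ℝ} (hq : 1 ≤ q) (ha : 0 ≤ a) (ham₁ : a ≤ m₁)
    (ham₂ : a ≤ m₂) (hlow : a ^ 3 ≤ N + a ^ 2)
    (hup : N ≤ m₂ * a * a * m₁ / q + √(q * (m₂ * a * a * m₁))) :
    a ^ 3 ≤ 2 * (q⁻¹ * m₁ ^ 2 * m₂ * a + √q * m₁ * m₂) := by
  have hq₀ : 0 ≤ q := zero_le_one.trans hq
  have hm₁ : 0 ≤ m₁ := ha.trans ham₁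
  have hm₂ : 0 ≤ m₂ := ha.trans ham₂
  have hm : 0 ≤ m₁ * m₂ := mul_nonneg hm₁ hm₂
  have haa : a * a ≤ m₁ * m₂ := mul_le_mul ham₁ ham₂ ha hm₁
  have hmain : m₂ * a * a * m₁ / q ≤ q⁻¹ * m₁ ^ 2 * m₂ * a := by
    have h := mul_le_mul_of_nonneg_left ham₁ (by positivity : 0 ≤ q⁻¹ * (m₂ * a * m₁))
    rw [div_eq_inv_mul]
    linarith
  have herror : √(q * (m₂ * a * a * m₁)) ≤ √q * m₁ * m₂ := by
    rw [show √q * m₁ * m₂ = √q * √((m₁ * m₂) ^ 2) by rw [Real.sqrt_sq hm]; ring,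
      ← Real.sqrt_mul (by positivity)]
    have h := mul_le_mul_of_nonneg_right haa hm
    gcongr
    linarith
  have hsq : a ^ 2 ≤ √q * m₁ * m₂ := by
    nlinarith [Real.one_le_sqrt.2 hq]
  have : 0 ≤ q⁻¹ * m₁ ^ 2 * m₂ * a := by positivity
  linarith

theorem sum_product_bound :
    ∃ C : ℝ, 0 < C ∧ ∀ (F : Type) [Field F] [Fintype F] [DecidableEq F] (A : Finset F),
      (A.card : ℝ) ^ 3 ≤
        C * ((Fintype.card F : ℝ)⁻¹ * ((A + A).card : ℝ) ^ 2 * ((A * A).card : ℝ) * A.card +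
          Real.sqrt (Fintype.card F) * ((A + A).card : ℝ) * ((A * A).card : ℝ)) := by
  refine ⟨2, two_pos, fun F _ _ _ A ↦ ?_⟩
  have hlow : (#A : ℝ) ^ 3 ≤ incidences (A * A) A⁻¹ A (A + A) + #A ^ 2 := by
    exact_mod_cast card_pow_three_le_incidences A
  have hup := incidences_le (A * A) A⁻¹ A (A + A)
  rw [card_inv] at hup
  exact cube_le_of_incidence_bounds (Nat.one_le_cast.2 Fintype.card_pos) (Nat.cast_nonneg _)
    (Nat.cast_le.2 card_le_card_add_self) (Nat.cast_le.2 card_le_card_mul_self₀) hlow hup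
end

section
/- Let A ⊆ F_q with q^{1/2} ≲ |A| ≲ q^{7/10}. Then max(|A+A|, |A·A|) ≥ c |A|^{3/2} / q^{1/4} for an absolute constant c > 0. -/
set_option linter.unusedSectionVars false
set_option maxHeartbeats 1000000

open Finset Pointwise AddChar

namespace SPaux

variable {F : Type} [Field F] [Fintype F] [DecidableEq F]


noncomputable def ψ (F : Type) [Field F] [Fintype F] : AddChar F ℂ :=
  AddChar.FiniteField.primitiveChar_to_Complex F

lemma ψ_prim : (ψ F).IsPrimitive := AddChar.FiniteField.primitiveChar_to_Complex_isPrimitive F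

lemma orth (v : F) : ∑ u : F, ψ F (u * v) = if v = 0 then (Fintype.card F : ℂ) else 0 := by
  rw [AddChar.sum_mulShift v ψ_prim]; split <;> simp

lemma conj_ψ (x : F) : (starRingEnd ℂ) (ψ F x) = ψ F (-x) := by
  have hR : 0 < ringChar F := Nat.pos_of_ne_zero (CharP.ringChar_ne_zero_of_finite F)
  rw [AddChar.starComp_apply hR, AddChar.inv_apply]

/-- exponential sum over a finset -/
noncomputable def es (B : Finset F) (u : F) : ℂ := ∑ b ∈ B, ψ F (u * b)

lemma parseval (B : Finset F) :
    ∑ u : F, ‖es B u‖ ^ 2 = (Fintype.card F : ℝ) * B.card := by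
  have key : ∑ u : F, (es B u * (starRingEnd ℂ) (es B u)) =
      (Fintype.card F : ℂ) * B.card := by
    have h1 : ∀ u : F, es B u * (starRingEnd ℂ) (es B u)
        = ∑ b ∈ B, ∑ b' ∈ B, ψ F (u * (b - b')) := by
      intro u
      rw [es, map_sum, Finset.sum_mul_sum]
      refine Finset.sum_congr rfl fun b _ => Finset.sum_congr rfl fun b' _ => ?_
      rw [conj_ψ, ← AddChar.map_add_eq_mul]
      ring_nf
    simp_rw [h1]
    rw [Finset.sum_comm]
    have h2 : ∀ b ∈ B, ∑ u : F, ∑ b' ∈ B, ψ F (u * (b - b'))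
        = (Fintype.card F : ℂ) := by
      intro b hb
      rw [Finset.sum_comm]
      have h3 : ∀ b' : F, ∑ u : F, ψ F (u * (b - b'))
          = if b - b' = 0 then (Fintype.card F : ℂ) else 0 := fun b' => orth _
      simp_rw [h3, sub_eq_zero]
      simp [Finset.sum_ite_eq, hb]
    rw [Finset.sum_congr rfl h2, Finset.sum_const]
    ring_nf
  have key2 := key
  simp_rw [Complex.mul_conj'] at key2
  have : ((∑ u : F, ‖es B u‖ ^ 2 : ℝ) : ℂ) = ((Fintype.card F : ℝ) * B.card : ℂ) := by
    push_cast
    exact key2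
  exact_mod_cast this


def Ncount (S X A T : Finset F) : ℕ :=
  ((T ×ˢ A ×ˢ S ×ˢ X).filter fun p => p.2.2.1 * p.2.2.2 + p.2.1 = p.1).card

lemma identity (S X A T : Finset F) :
    ∑ u : F, ((∑ s ∈ S, es X (u * s)) * es A u * es T (-u))
      = (Fintype.card F : ℂ) * (Ncount S X A T) := by
  have expand : ∀ u : F, (∑ s ∈ S, es X (u * s)) * es A u * es T (-u)
      = ∑ p ∈ T ×ˢ A ×ˢ S ×ˢ X, ψ F (u * (p.2.2.1 * p.2.2.2 + p.2.1 - p.1)) := by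
    intro u
    simp only [Finset.sum_product, es, Finset.sum_mul, Finset.mul_sum]
    refine Finset.sum_congr rfl fun t _ => Finset.sum_congr rfl fun a _ =>
      Finset.sum_congr rfl fun s _ => Finset.sum_congr rfl fun x _ => ?_
    rw [← AddChar.map_add_eq_mul, ← AddChar.map_add_eq_mul]
    congr 1
    ring
  rw [Finset.sum_congr rfl fun u _ => expand u, Finset.sum_comm]
  have h2 : ∀ p ∈ T ×ˢ A ×ˢ S ×ˢ X, ∑ u : F, ψ F (u * (p.2.2.1 * p.2.2.2 + p.2.1 - p.1))
      = if p.2.2.1 * p.2.2.2 + p.2.1 = p.1 then (Fintype.card F : ℂ) else 0 := by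
    intro p _
    rw [orth]
    simp [sub_eq_zero]
  rw [Finset.sum_congr rfl h2, ← Finset.sum_filter, Finset.sum_const, nsmul_eq_mul]
  rw [Ncount, mul_comm]

lemma key_bound (S X A T : Finset F) :
    (Fintype.card F : ℝ) * Ncount S X A T
      ≤ (S.card : ℝ) * X.card * A.card * T.card
        + Real.sqrt (Fintype.card F) ^ 3
          * Real.sqrt ((S.card : ℝ) * X.card * A.card * T.card) := by
  classical
  set q : ℝ := (Fintype.card F : ℝ) with hq
  have hq0 : (0:ℝ) ≤ q := by positivity
  set P : ℝ := (S.card : ℝ) * X.card * A.card * T.card with hP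
  set G : F → ℂ := fun u => (∑ s ∈ S, es X (u * s)) * es A u * es T (-u) with hG
  -- value at 0
  have hG0 : G 0 = (P : ℂ) := by
    simp only [hG, hP, es, zero_mul, neg_zero, AddChar.map_zero_eq_one, Finset.sum_const,
      nsmul_eq_mul, mul_one]
    push_cast
    ring
  -- split sum
  have hsplit : ∑ u : F, G u = G 0 + ∑ u ∈ Finset.univ.erase 0, G u := by
    rw [← Finset.add_sum_erase _ _ (Finset.mem_univ 0)]
  -- bound each nonzero u
  have hSA : ∀ u : F, u ≠ 0 → ‖∑ s ∈ S, es X (u * s)‖ ≤ Real.sqrt (q * S.card * X.card) := by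
    intro u hu
    have h1 : ‖∑ s ∈ S, es X (u * s)‖ ≤ ∑ s ∈ S, ‖es X (u * s)‖ := norm_sum_le _ _
    have h2 : (∑ s ∈ S, ‖es X (u * s)‖) ^ 2 ≤ (S.card : ℝ) * ∑ s ∈ S, ‖es X (u * s)‖ ^ 2 :=
      sq_sum_le_card_mul_sum_sq
    have h3 : ∑ s ∈ S, ‖es X (u * s)‖ ^ 2 ≤ ∑ w : F, ‖es X w‖ ^ 2 := by
      rw [show (∑ s ∈ S, ‖es X (u * s)‖ ^ 2) = ∑ w ∈ S.image (u * ·), ‖es X w‖ ^ 2 by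
        rw [Finset.sum_image (fun a _ b _ h => mul_left_cancel₀ hu h)]]
      exact Finset.sum_le_sum_of_subset_of_nonneg (Finset.subset_univ _)
        (fun _ _ _ => by positivity)
    have h4 := parseval (F := F) X
    have h5 : ‖∑ s ∈ S, es X (u * s)‖ ^ 2 ≤ q * S.card * X.card := by
      calc ‖∑ s ∈ S, es X (u * s)‖ ^ 2 ≤ (∑ s ∈ S, ‖es X (u * s)‖) ^ 2 := by
            apply pow_le_pow_left₀ (norm_nonneg _) h1
        _ ≤ (S.card : ℝ) * ∑ s ∈ S, ‖es X (u * s)‖ ^ 2 := h2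
        _ ≤ (S.card : ℝ) * ∑ w : F, ‖es X w‖ ^ 2 := by
            apply mul_le_mul_of_nonneg_left h3 (by positivity)
        _ = q * S.card * X.card := by rw [h4]; ring
    have := Real.sqrt_le_sqrt h5
    rwa [Real.sqrt_sq (norm_nonneg _)] at this
  -- CS over u
  have hCS : ∑ u : F, ‖es A u‖ * ‖es T (-u)‖
      ≤ Real.sqrt (q * A.card) * Real.sqrt (q * T.card) := by
    have h1 : (∑ u : F, ‖es A u‖ * ‖es T (-u)‖) ^ 2
        ≤ (∑ u : F, ‖es A u‖ ^ 2) * ∑ u : F, ‖es T (-u)‖ ^ 2 :=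
      Finset.sum_mul_sq_le_sq_mul_sq _ _ _
    have h2 : ∑ u : F, ‖es T (-u)‖ ^ 2 = ∑ u : F, ‖es T u‖ ^ 2 :=
      Fintype.sum_equiv (Equiv.neg F) _ _ (fun u => rfl)
    have h3 : (∑ u : F, ‖es A u‖ * ‖es T (-u)‖) ^ 2 ≤ (q * A.card) * (q * T.card) := by
      rw [← parseval A, ← parseval T, ← h2]; exact h1
    have h4 := Real.sqrt_le_sqrt h3
    rwa [Real.sqrt_sq (by positivity), Real.sqrt_mul (by positivity)] at h4
  -- error bound
  have herr : ‖∑ u ∈ Finset.univ.erase 0, G u‖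
      ≤ Real.sqrt (q * S.card * X.card) * (Real.sqrt (q * A.card) * Real.sqrt (q * T.card)) := by
    calc ‖∑ u ∈ Finset.univ.erase 0, G u‖ ≤ ∑ u ∈ Finset.univ.erase 0, ‖G u‖ := norm_sum_le _ _
      _ ≤ ∑ u ∈ Finset.univ.erase 0, Real.sqrt (q * S.card * X.card)
            * (‖es A u‖ * ‖es T (-u)‖) := by
          refine Finset.sum_le_sum fun u hu => ?_
          have hu0 : u ≠ 0 := Finset.ne_of_mem_erase hu
          rw [hG]
          simp only [norm_mul]
          rw [mul_assoc]
          exact mul_le_mul_of_nonneg_right (hSA u hu0) (by positivity)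
      _ = Real.sqrt (q * S.card * X.card) * ∑ u ∈ Finset.univ.erase 0,
            ‖es A u‖ * ‖es T (-u)‖ := by rw [Finset.mul_sum]
      _ ≤ Real.sqrt (q * S.card * X.card) * ∑ u : F, ‖es A u‖ * ‖es T (-u)‖ := by
          refine mul_le_mul_of_nonneg_left ?_ (by positivity)
          exact Finset.sum_le_sum_of_subset_of_nonneg (Finset.subset_univ _)
            (fun _ _ _ => by positivity)
      _ ≤ _ := mul_le_mul_of_nonneg_left hCS (by positivity)
  -- combine
  have hqN : q * Ncount S X A T = ‖∑ u : F, G u‖ := by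
    rw [identity]
    rw [norm_mul]
    simp [hq, abs_of_nonneg]
  have : q * Ncount S X A T ≤ P + Real.sqrt (q * S.card * X.card)
      * (Real.sqrt (q * A.card) * Real.sqrt (q * T.card)) := by
    rw [hqN, hsplit]
    calc ‖G 0 + ∑ u ∈ Finset.univ.erase 0, G u‖
        ≤ ‖G 0‖ + ‖∑ u ∈ Finset.univ.erase 0, G u‖ := norm_add_le _ _
      _ ≤ P + _ := by
          refine add_le_add ?_ herr
          rw [hG0, Complex.norm_real]
          exact le_of_eq (abs_of_nonneg (by positivity))
  refine this.trans ?_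
  have : Real.sqrt (q * S.card * X.card) * (Real.sqrt (q * A.card) * Real.sqrt (q * T.card))
      = Real.sqrt q ^ 3 * Real.sqrt P := by
    rw [hP]
    rw [Real.sqrt_mul (by positivity), Real.sqrt_mul hq0, Real.sqrt_mul hq0,
      Real.sqrt_mul (by positivity), Real.sqrt_mul (by positivity), Real.sqrt_mul (by positivity),
      Real.sqrt_mul (by positivity : (0:ℝ) ≤ (S.card : ℝ))]
    ring
  rw [this]


lemma lower (A : Finset F) :
    (A.card - 1) * A.card * A.card ≤ Ncount (A * A) A⁻¹ A (A + A) := by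
  classical
  have hinj : ∀ p ∈ (A.erase 0) ×ˢ A ×ˢ A,
      ((p.2.1 + p.2.2, p.2.2, p.1 * p.2.1, p.1⁻¹) : F × F × F × F) ∈
        (((A+A) ×ˢ A ×ˢ (A*A) ×ˢ A⁻¹).filter
          fun q => q.2.2.1 * q.2.2.2 + q.2.1 = q.1) := by
    rintro ⟨a₁, a₂, a₃⟩ hp
    simp only [Finset.mem_product, Finset.mem_erase] at hp
    obtain ⟨⟨h10, h1⟩, h2, h3⟩ := hp
    simp only [Finset.mem_filter, Finset.mem_product]
    refine ⟨⟨Finset.add_mem_add h2 h3, h3, Finset.mul_mem_mul h1 h2, ?_⟩, ?_⟩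
    · simp only [Finset.mem_inv]
      exact ⟨a₁, h1, rfl⟩
    · field_simp
  have hN : ((A.erase 0) ×ˢ A ×ˢ A).card ≤ Ncount (A * A) A⁻¹ A (A + A) := by
    apply Finset.card_le_card_of_injOn _ hinj
    rintro ⟨a₁, a₂, a₃⟩ hp ⟨b₁, b₂, b₃⟩ hq h
    simp only [Finset.mem_coe, Finset.mem_product, Finset.mem_erase] at hp hq
    simp only [Prod.mk.injEq] at h
    obtain ⟨he1, he2, he3, he4⟩ := h
    have h1 : a₁ = b₁ := inv_injective he4
    have h2 : a₂ = b₂ := by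
      have := he1
      rw [he2] at this
      exact add_right_cancel this
    exact Prod.ext h1 (Prod.ext h2 he2)
  calc (A.card - 1) * A.card * A.card ≤ (A.erase 0).card * A.card * A.card := by
        gcongr
        exact Finset.pred_card_le_card_erase
    _ = ((A.erase 0) ×ˢ A ×ˢ A).card := by simp [Finset.card_product, mul_assoc]
    _ ≤ _ := hN

lemma card_inv_eq (A : Finset F) : A⁻¹.card = A.card := by
  rw [Finset.inv_def]
  exact Finset.card_image_of_injective _ inv_injective


end SPaux

open SPaux in
theorem sum_product_range (C₁ : ℝ) (hC₁ : 0 < C₁) :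
    ∃ c : ℝ, 0 < c ∧ ∀ (F : Type) [Field F] [Fintype F] [DecidableEq F] (A : Finset F),
      Real.sqrt (Fintype.card F) ≤ C₁ * A.card →
      (A.card : ℝ) ≤ C₁ * (Fintype.card F : ℝ) ^ ((7 : ℝ) / 10) →
      c * (A.card : ℝ) ^ ((3 : ℝ) / 2) / (Fintype.card F : ℝ) ^ ((1 : ℝ) / 4) ≤
        max ((A + A).card : ℝ) ((A * A).card : ℝ) := by
  have hsC₁ : 0 < Real.sqrt C₁ := Real.sqrt_pos.mpr hC₁
  refine ⟨min (1/2) (min (1/(2*C₁)) (1/(4*Real.sqrt C₁))), by positivity, ?_⟩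
  set c := min (1/2) (min (1/(2*C₁)) (1/(4*Real.sqrt C₁))) with hc
  have hc0 : 0 < c := by positivity
  have hc1 : c ≤ 1/2 := min_le_left _ _
  have hc2 : c ≤ 1/(2*C₁) := le_trans (min_le_right _ _) (min_le_left _ _)
  have hc3 : c ≤ 1/(4*Real.sqrt C₁) := le_trans (min_le_right _ _) (min_le_right _ _)
  intro F _ _ _ A h1 h2
  set Q : ℝ := (Fintype.card F : ℝ) with hQdef
  have hQ1 : (1:ℝ) ≤ Q := by
    rw [hQdef]
    exact_mod_cast Nat.one_le_iff_ne_zero.mpr Fintype.card_ne_zero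
  have hQ0 : (0:ℝ) < Q := lt_of_lt_of_le one_pos hQ1
  set a : ℝ := (A.card : ℝ) with hadef
  set M : ℝ := max ((A + A).card : ℝ) ((A * A).card : ℝ) with hM
  have hM0 : 0 ≤ M := le_max_of_le_left (Nat.cast_nonneg _)
  set y : ℝ := Q ^ ((1:ℝ)/4) with hy
  have hy1 : 1 ≤ y := Real.one_le_rpow hQ1 (by norm_num)
  have hy0 : 0 < y := lt_of_lt_of_le one_pos hy1
  have hy4 : y ^ 4 = Q := by
    rw [hy, ← Real.rpow_natCast (Q ^ ((1:ℝ)/4)) 4, ← Real.rpow_mul (le_of_lt hQ0)]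
    norm_num
  have hsqrtQ : Real.sqrt Q = y ^ 2 := by
    rw [Real.sqrt_eq_rpow, hy, ← Real.rpow_natCast (Q ^ ((1:ℝ)/4)) 2,
      ← Real.rpow_mul (le_of_lt hQ0)]
    norm_num
  -- case on |A|
  rcases Nat.lt_or_ge A.card 2 with hA2 | hA2
  · interval_cases h : A.card
    · -- |A| = 0
      norm_num at hadef
      rw [hadef, Real.zero_rpow (by norm_num), mul_zero, zero_div]
      exact le_max_of_le_left (Nat.cast_nonneg _)
    · -- |A| = 1
      norm_num at hadef
      have ha1 : a = 1 := hadef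
      have hAne : A.Nonempty := Finset.card_pos.mp (by omega)
      have hAA : 1 ≤ ((A + A).card : ℝ) := by
        have : (A + A).Nonempty := hAne.add hAne
        exact_mod_cast Finset.card_pos.mpr this
      have : c * a ^ ((3:ℝ)/2) / y ≤ 1 := by
        rw [ha1, Real.one_rpow, mul_one]
        rw [div_le_one hy0]
        calc c ≤ 1/2 := hc1
          _ ≤ 1 := by norm_num
          _ ≤ y := hy1
      exact this.trans (le_max_of_le_left hAA)
  -- main case : |A| ≥ 2
  have ha2 : (2:ℝ) ≤ a := by rw [hadef]; exact_mod_cast hA2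
  have ha0 : 0 < a := lt_of_lt_of_le two_pos ha2
  set x : ℝ := Real.sqrt a with hx
  have hx0 : 0 < x := Real.sqrt_pos.mpr ha0
  have hx2 : x ^ 2 = a := Real.sq_sqrt (le_of_lt ha0)
  have hax : a ^ ((3:ℝ)/2) = x ^ 3 := by
    rw [hx, Real.sqrt_eq_rpow, ← Real.rpow_natCast (a ^ ((1:ℝ)/2)) 3,
      ← Real.rpow_mul (le_of_lt ha0)]
    norm_num
  -- the key chain
  have hkey := key_bound (F := F) (A * A) A⁻¹ A (A + A)
  have hlow := lower (F := F) A
  have hSM : ((A * A).card : ℝ) ≤ M := le_max_right _ _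
  have hTM : ((A + A).card : ℝ) ≤ M := le_max_left _ _
  have hinv : ((A⁻¹).card : ℝ) = a := by rw [card_inv_eq]
  have hlowR : (a - 1) * a * a ≤ (Ncount (A * A) A⁻¹ A (A + A) : ℝ) := by
    have h1 : ((A.card - 1) * A.card * A.card : ℕ) ≤ (Ncount (A * A) A⁻¹ A (A + A) : ℕ) := hlow
    have h2 : (((A.card - 1) * A.card * A.card : ℕ) : ℝ) = (a - 1) * a * a := by
      have : (1:ℕ) ≤ A.card := by omega
      push_cast [Nat.cast_sub this]
      ring
    rw [← h2]
    exact_mod_cast h1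
  have hP : ((A * A).card : ℝ) * (A⁻¹).card * A.card * (A + A).card ≤ M * a * a * M := by
    rw [hinv]
    calc ((A * A).card : ℝ) * a * a * ((A + A).card : ℝ) ≤ M * a * a * ((A + A).card : ℝ) :=
          mul_le_mul_of_nonneg_right (mul_le_mul_of_nonneg_right
            (mul_le_mul_of_nonneg_right hSM ha0.le) ha0.le) (Nat.cast_nonneg _)
      _ ≤ M * a * a * M := by
          apply mul_le_mul_of_nonneg_left hTM (by positivity)
  have hsqrtP : Real.sqrt (((A * A).card : ℝ) * (A⁻¹).card * A.card * (A + A).card)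
      ≤ M * a := by
    calc Real.sqrt (((A * A).card : ℝ) * (A⁻¹).card * A.card * (A + A).card)
        ≤ Real.sqrt (M * a * a * M) := Real.sqrt_le_sqrt hP
      _ = M * a := by
          rw [show M * a * a * M = (M * a)^2 by ring, Real.sqrt_sq (by positivity)]
  have chain : Q * ((a - 1) * a * a) ≤ M * a * a * M + y ^ 6 * (M * a) := by
    calc Q * ((a - 1) * a * a) ≤ Q * (Ncount (A * A) A⁻¹ A (A + A) : ℝ) := by
          apply mul_le_mul_of_nonneg_left hlowR (le_of_lt hQ0)
      _ ≤ ((A * A).card : ℝ) * (A⁻¹).card * A.card * (A + A).card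
            + Real.sqrt Q ^ 3 * Real.sqrt (((A * A).card : ℝ) * (A⁻¹).card * A.card
              * (A + A).card) := hkey
      _ ≤ M * a * a * M + y ^ 6 * (M * a) := by
          rw [hsqrtQ]
          refine add_le_add hP ?_
          rw [show (y^2)^3 = y^6 by ring]
          exact mul_le_mul_of_nonneg_left hsqrtP (by positivity)
  -- reduce goal
  rw [hax, div_le_iff₀ hy0]
  -- chain in x,y : y⁴ (x²-1) x⁴ ≤ M² x⁴ + y⁶ M x²
  have chainxy : y^4 * ((x^2 - 1) * x^2 * x^2) ≤ M * x^2 * x^2 * M + y^6 * (M * x^2) := by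
    rw [hx2, hy4]; exact chain
  -- bound a ≤ C₁ y³ :
  have haub : x^2 ≤ C₁ * y^3 := by
    rw [hx2]
    refine h2.trans ?_
    have : Q ^ ((7:ℝ)/10) ≤ Q ^ ((3:ℝ)/4) := Real.rpow_le_rpow_of_exponent_le hQ1 (by norm_num)
    have h3 : Q ^ ((3:ℝ)/4) = y ^ 3 := by
      rw [hy, ← Real.rpow_natCast (Q ^ ((1:ℝ)/4)) 3, ← Real.rpow_mul (le_of_lt hQ0)]
      norm_num
    rw [← h3]
    exact mul_le_mul_of_nonneg_left this (le_of_lt hC₁)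
  -- bound y² ≤ C₁ x²  (from sqrt Q ≤ C₁ a), hence y ≤ √C₁ x
  have hylb : y ≤ Real.sqrt C₁ * x := by
    have h4 : y^2 ≤ C₁ * x^2 := by
      rw [hx2, ← hsqrtQ]
      exact h1
    have h5 : (Real.sqrt C₁ * x)^2 = C₁ * x^2 := by
      rw [mul_pow, Real.sq_sqrt (le_of_lt hC₁)]
    calc y = Real.sqrt (y^2) := (Real.sqrt_sq hy0.le).symm
      _ ≤ Real.sqrt (C₁ * x^2) := Real.sqrt_le_sqrt h4
      _ = Real.sqrt C₁ * x := by rw [← h5, Real.sqrt_sq (by positivity)]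
  by_cases hMb : y^2 * x / 2 ≤ M
  · -- case 1 : M ≥ y²x/2 ; use x² ≤ C₁ y³
    have hcC : c * C₁ ≤ 1/2 := by
      calc c * C₁ ≤ (1/(2*C₁)) * C₁ := mul_le_mul_of_nonneg_right hc2 hC₁.le
        _ = 1/2 := by field_simp
    calc c * x^3 = c * (x^2 * x) := by ring
      _ ≤ c * (C₁ * y^3 * x) := by
          apply mul_le_mul_of_nonneg_left _ (le_of_lt hc0)
          exact mul_le_mul_of_nonneg_right haub (le_of_lt hx0)
      _ = (c * C₁) * (y^3 * x) := by ring
      _ ≤ (1/2) * (y^3 * x) := by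
          apply mul_le_mul_of_nonneg_right hcC (by positivity)
      _ = (y^2 * x / 2) * y := by ring
      _ ≤ M * y := by
          apply mul_le_mul_of_nonneg_right hMb (le_of_lt hy0)
  · -- case 2 : M < y²x/2 : derive M ≥ x⁴/(4y²)
    push_neg at hMb
    have hMM : M * M ≤ (y^2*x/2) * (y^2*x/2) :=
      mul_le_mul hMb.le hMb.le hM0 (by positivity)
    have hMx : M * x^2 * x^2 * M ≤ y^4*x^2*x^2*x^2/4 := by
      calc M * x^2 * x^2 * M = (M*M)*(x^2*x^2) := by ring
        _ ≤ ((y^2*x/2)*(y^2*x/2))*(x^2*x^2) :=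
            mul_le_mul_of_nonneg_right hMM (by positivity)
        _ = y^4*x^2*x^2*x^2/4 := by ring
    have hxx : x^2/2 ≤ x^2 - 1 := by
      have h22 : (2:ℝ) ≤ x^2 := by rw [hx2]; exact ha2
      linarith
    have hchain2 : y^4*(x^2*x^2*x^2)/2 ≤ M*x^2*x^2*M + y^6*(M*x^2) := by
      have hmul : y^4*(x^2/2*x^2*x^2) ≤ y^4*((x^2-1)*x^2*x^2) := by
        apply mul_le_mul_of_nonneg_left _ (by positivity)
        apply mul_le_mul_of_nonneg_right (mul_le_mul_of_nonneg_right hxx (by positivity))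
          (by positivity)
      calc y^4*(x^2*x^2*x^2)/2 = y^4*(x^2/2*x^2*x^2) := by ring
        _ ≤ y^4*((x^2-1)*x^2*x^2) := hmul
        _ ≤ M*x^2*x^2*M + y^6*(M*x^2) := chainxy
    have hM2 : y^4*(x^2*x^2*x^2)/4 ≤ y^6*(M*x^2) := by linarith
    have hMlb : x^4 / (4 * y^2) ≤ M := by
      rw [div_le_iff₀ (by positivity)]
      have hfac : (0:ℝ) < y^4 * x^2 := by positivity
      have hm : (y^4 * x^2) * x^4 ≤ (y^4 * x^2) * (M * (4 * y^2)) := by linarith [hM2]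
      exact le_of_mul_le_mul_left hm hfac
    have h4cy : 4 * c * y ≤ x := by
      calc 4 * c * y ≤ 4 * c * (Real.sqrt C₁ * x) := by
            apply mul_le_mul_of_nonneg_left hylb (by positivity)
        _ = (4 * c * Real.sqrt C₁) * x := by ring
        _ ≤ 1 * x := by
            apply mul_le_mul_of_nonneg_right _ hx0.le
            calc 4 * c * Real.sqrt C₁ ≤ 4 * (1/(4*Real.sqrt C₁)) * Real.sqrt C₁ := by
                  apply mul_le_mul_of_nonneg_right _ hsC₁.le
                  linarith
              _ = 1 := by field_simp
        _ = x := by ring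
    have h4c : 4 * c ≤ x / y := by
      rw [le_div_iff₀ hy0]
      linarith
    calc c * x^3 = (4 * c) * x^3 / 4 := by ring
      _ ≤ (x / y) * x^3 / 4 := by
          have := mul_le_mul_of_nonneg_right h4c (by positivity : (0:ℝ) ≤ x^3)
          linarith
      _ = (x^4 / (4 * y^2)) * y := by field_simp
      _ ≤ M * y := mul_le_mul_of_nonneg_right hMlb hy0.le
end

section
/- Let A ⊆ F_q with |A| ≈ q^{3/4} and |A+A| ≤ C|A|. Then |A·A| ≥ cq for an absolute constant c > 0. -/
open Finset Pointwise

/-! Every line `y = a (x - b)` with `a ∈ A \ {0}`, `b ∈ A` contains the `|A|` points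
`(b + c, a c)`, `c ∈ A`, of `P = (A + A) × (A · A)`. These `|A \ {0}| |A|` lines thus have at least
`|A \ {0}| |A|²` incidences with `P`, while Vinh's bound caps the incidences of `P` with any family
`L` of lines by `|P| |L| / q + √(q |P| |L|)`. Comparing the two gives `|A + A| |A · A| ≳ |A| q` as soon
as `|A|³ ≥ q²`, which the hypothesis `|A| ≳ q^{3/4}` guarantees for large `q`.

Vinh's bound is a second moment estimate: for distinct `x ≠ x'` the map `(m, c) ↦ (m x + c, m x' + c)`
is a bijection of `F²`, so the line sums of any `u : F² → ℝ` deviate from their mean `∑ u / q` by at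
most `q ∑ u²` in total square. -/

section Lines

variable {F : Type*} [Field F] [Fintype F]

lemma sum_comp_line (x : F) (h : F → ℝ) :
    ∑ l : F × F, h (l.1 * x + l.2) = Fintype.card F * ∑ y, h y := by
  rw [Fintype.sum_prod_type]
  exact (sum_congr rfl fun m _ => Equiv.sum_comp (Equiv.addLeft (m * x)) h).trans
    (by rw [sum_const, card_univ, nsmul_eq_mul])

lemma sum_mul_comp_line_of_ne {x x' : F} (hx : x ≠ x') (f g : F → ℝ) :
    ∑ l : F × F, f (l.1 * x + l.2) * g (l.1 * x' + l.2) = (∑ y, f y) * ∑ y, g y := by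
  have hinj : Function.Injective fun l : F × F => (l.1 * x + l.2, l.1 * x' + l.2) := by
    rintro ⟨m, c⟩ ⟨n, d⟩ h
    simp only [Prod.mk.injEq] at h
    have hm : m = n := by
      have : (m - n) * (x - x') = 0 := by linear_combination h.1 - h.2
      simpa [sub_eq_zero, hx] using this
    subst hm
    simpa using h.1
  rw [Fintype.sum_mul_sum, ← Fintype.sum_prod_type']
  exact Fintype.sum_bijective _ hinj.bijective_of_finite _ _ fun _ => rfl

/-- Lines are the non-vertical ones: `l = (m, c)` stands for `y = m * x + c`. -/
def lineSum (u : F × F → ℝ) (l : F × F) : ℝ := ∑ x, u (x, l.1 * x + l.2)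

lemma sum_lineSum (u : F × F → ℝ) :
    ∑ l, lineSum u l = Fintype.card F * ∑ p, u p := by
  simp only [lineSum]
  rw [Finset.sum_comm, Fintype.sum_prod_type, Finset.mul_sum]
  exact sum_congr rfl fun x _ => sum_comp_line x fun y => u (x, y)

lemma sum_lineSum_sq (u : F × F → ℝ) :
    ∑ l, lineSum u l ^ 2 = Fintype.card F * ∑ p, u p ^ 2 + (∑ p, u p) ^ 2
      - ∑ x, (∑ y, u (x, y)) ^ 2 := by
  classical
  set U : F → ℝ := fun x => ∑ y, u (x, y)
  have hpair : ∀ x x', ∑ l : F × F, u (x, l.1 * x + l.2) * u (x', l.1 * x' + l.2) =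
      U x * U x' + if x = x' then Fintype.card F * ∑ y, u (x, y) ^ 2 - U x ^ 2 else 0 := by
    intro x x'
    by_cases hx : x = x'
    · subst hx
      simp only [if_true, ← sq, sum_comp_line x fun y => u (x, y) ^ 2]
      ring
    · simp only [hx, if_false, add_zero]
      exact sum_mul_comp_line_of_ne hx (fun y => u (x, y)) fun y => u (x', y)
  have hexpand : ∑ l, lineSum u l ^ 2 =
      ∑ x, ∑ x', ∑ l : F × F, u (x, l.1 * x + l.2) * u (x', l.1 * x' + l.2) := by
    simp only [lineSum, sq, sum_mul_sum]
    rw [sum_comm]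
    exact sum_congr rfl fun x _ => sum_comm
  simp only [hexpand, hpair, sum_add_distrib, sum_ite_eq, mem_univ, if_true, ← mul_sum,
    ← sum_mul, Fintype.sum_prod_type, sum_sub_distrib, U]
  ring

lemma sum_sq_lineSum_sub_le (u : F × F → ℝ) :
    ∑ l, (lineSum u l - (∑ p, u p) / Fintype.card F) ^ 2 ≤ Fintype.card F * ∑ p, u p ^ 2 := by
  have hq : (Fintype.card F : ℝ) ≠ 0 := by positivity
  have hexp : ∑ l, (lineSum u l - (∑ p, u p) / Fintype.card F) ^ 2 =
      ∑ l, lineSum u l ^ 2 - (∑ p, u p) ^ 2 := by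
    simp only [sub_sq, sum_add_distrib, sum_sub_distrib, ← sum_mul, ← mul_sum, sum_lineSum,
      sum_const, card_univ, Fintype.card_prod, nsmul_eq_mul]
    push_cast
    field_simp
    ring
  rw [hexp, sum_lineSum_sq]
  linarith [sum_nonneg fun x (_ : x ∈ univ) => sq_nonneg (∑ y, u (x, y))]

end Lines

section Incidences

variable {F : Type*} [Field F] [Fintype F] [DecidableEq F]

def lineCount (P : Finset (F × F)) (l : F × F) : ℕ := #{x | (x, l.1 * x + l.2) ∈ P}

lemma natCast_lineCount (P : Finset (F × F)) (l : F × F) :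
    (lineCount P l : ℝ) = lineSum (fun p => if p ∈ P then 1 else 0) l :=
  natCast_card_filter _ _

/-- Vinh's point–line incidence bound. -/
theorem sum_lineCount_le (P L : Finset (F × F)) :
    ∑ l ∈ L, (lineCount P l : ℝ) ≤
      #P * #L / Fintype.card F + √(Fintype.card F * #P * #L) := by
  set q : ℝ := (Fintype.card F : ℝ)
  set u : F × F → ℝ := fun p => if p ∈ P then 1 else 0
  have hsum : ∑ p, u p = #P := by simp [u]
  have hsq : ∑ p, u p ^ 2 = #P := by simp [u]
  have hvar : ∑ l ∈ L, ((lineCount P l : ℝ) - #P / q) ^ 2 ≤ q * #P := by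
    refine (sum_le_univ_sum_of_nonneg fun _ => sq_nonneg _).trans ?_
    simpa only [natCast_lineCount, hsum, hsq] using sum_sq_lineSum_sub_le u
  have hdev : ∑ l ∈ L, ((lineCount P l : ℝ) - #P / q) ≤ √(q * #P * #L) := by
    refine (le_abs_self _).trans (Real.abs_le_sqrt ?_)
    calc _ ≤ #L * ∑ l ∈ L, ((lineCount P l : ℝ) - #P / q) ^ 2 := sq_sum_le_card_mul_sum_sq
      _ ≤ #L * (q * #P) := by gcongr
      _ = q * #P * #L := by ring
  calc ∑ l ∈ L, (lineCount P l : ℝ)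
      = #P * #L / q + ∑ l ∈ L, ((lineCount P l : ℝ) - #P / q) := by
        rw [sum_sub_distrib, sum_const, nsmul_eq_mul]; ring
    _ ≤ #P * #L / q + √(q * #P * #L) := by gcongr

lemma card_le_lineCount_sumset_productset {A : Finset F} {a b : F} (ha : a ∈ A) (hb : b ∈ A) :
    #A ≤ lineCount ((A + A) ×ˢ (A * A)) (a, -(a * b)) := by
  calc #A = #(A.map (Equiv.addLeft b).toEmbedding) := (card_map _).symm
    _ ≤ _ := card_le_card fun x hx => by
      obtain ⟨c, hc, rfl⟩ := mem_map.1 hx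
      have hline : a * (b + c) + -(a * b) = a * c := by ring
      simp only [Equiv.coe_toEmbedding, Equiv.coe_addLeft, mem_filter, mem_univ,
        true_and, mem_product, hline]
      exact ⟨add_mem_add hb hc, mul_mem_mul ha hc⟩

theorem card_erase_zero_mul_card_sq_le (A : Finset F) :
    (#(A.erase 0) * #A * #A : ℝ) ≤
      #(A + A) * #(A * A) * (#(A.erase 0) * #A) / Fintype.card F +
        √(Fintype.card F * (#(A + A) * #(A * A)) * (#(A.erase 0) * #A)) := by
  set L := ((A.erase 0) ×ˢ A).image fun ab => (ab.1, -(ab.1 * ab.2))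
  have hL : #L = #(A.erase 0) * #A := by
    rw [card_image_of_injOn, card_product]
    rintro ⟨a, b⟩ hab ⟨a', b'⟩ - h
    simp only [Prod.mk.injEq, neg_inj] at h
    obtain ⟨rfl, h⟩ := h
    exact Prod.ext rfl (mul_left_cancel₀ (mem_erase.1 (mem_product.1 hab).1).1 h)
  have hvinh := sum_lineCount_le ((A + A) ×ˢ (A * A)) L
  rw [card_product, hL] at hvinh
  push_cast at hvinh
  calc (#(A.erase 0) * #A * #A : ℝ) = ∑ _l ∈ L, (#A : ℝ) := by
        rw [sum_const, nsmul_eq_mul, hL]; push_cast; ring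
    _ ≤ ∑ l ∈ L, (lineCount ((A + A) ×ˢ (A * A)) l : ℝ) := by
        refine sum_le_sum fun l hl => ?_
        obtain ⟨⟨a, b⟩, hab, rfl⟩ := mem_image.1 hl
        obtain ⟨ha, hb⟩ := mem_product.1 hab
        exact_mod_cast card_le_lineCount_sumset_productset (mem_of_mem_erase ha) hb
    _ ≤ _ := hvinh

end Incidences

lemma le_of_incidence_bound {q k k' s d C : ℝ} (hq : 0 < q) (hC : 0 < C) (hk : 2 ≤ k)
    (hk' : k ≤ k' + 1) (hs : 0 ≤ s) (hd : 0 ≤ d) (hsk : s ≤ C * k) (hqk : q ^ 2 ≤ k ^ 3)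
    (h : k' * k * k ≤ s * d * (k' * k) / q + √(q * (s * d) * (k' * k))) :
    q / (4 * C) ≤ d := by
  rw [div_le_iff₀ (by positivity)]
  set n := k' * k
  have hn : k ^ 2 / 2 ≤ n := by nlinarith
  have hn0 : 0 < n := by nlinarith
  have hdC : s * d ≤ C * k * d := mul_le_mul_of_nonneg_right hsk hd
  -- Either `s * d` is already large, or the first term of `h` is at most a quarter of its left side.
  rcases le_or_gt (s * d) (k * q / 4) with hN | hN
  · have hsqrt : 3 / 4 * (n * k) ≤ √(q * (s * d) * n) := by
      have : s * d * n / q ≤ n * k / 4 := by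
        rw [div_le_iff₀ hq]; nlinarith
      linarith
    have hsq : 9 * n * k ^ 2 ≤ 16 * q * (s * d) := by
      have := pow_le_pow_left₀ (by positivity) hsqrt 2
      rw [Real.sq_sqrt (by positivity)] at this
      exact le_of_mul_le_mul_right (by nlinarith) hn0
    have hsumset : 9 * n * k ≤ 16 * q * C * d :=
      le_of_mul_le_mul_right (by nlinarith [mul_le_mul_of_nonneg_left hdC hq.le])
        (by positivity : 0 < k)
    have hcube : 9 * q ^ 2 ≤ 32 * q * C * d := by nlinarith
    nlinarith
  · nlinarith

lemma sq_le_pow_three_of_mul_rpow_le {c q k : ℝ} (hc : 0 < c) (hq : 0 ≤ q) (hcq : 1 ≤ c ^ 12 * q)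
    (hk : c * q ^ ((3 : ℝ) / 4) ≤ k) : q ^ 2 ≤ k ^ 3 := by
  have hk0 : 0 ≤ k := (by positivity : 0 ≤ c * q ^ ((3 : ℝ) / 4)).trans hk
  have h12 : c ^ 12 * q ^ 9 ≤ k ^ 12 := by
    have := pow_le_pow_left₀ (by positivity) hk 12
    have e : (q ^ ((3 : ℝ) / 4)) ^ 12 = q ^ 9 := by
      rw [← Real.rpow_natCast (q ^ _), ← Real.rpow_mul hq, ← Real.rpow_natCast q 9]; norm_num
    rwa [mul_pow, e] at this
  have h8 : (q ^ 2) ^ 4 ≤ (k ^ 3) ^ 4 := by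
    calc (q ^ 2) ^ 4 = q ^ 8 * 1 := by ring
      _ ≤ q ^ 8 * (c ^ 12 * q) := by gcongr
      _ = c ^ 12 * q ^ 9 := by ring
      _ ≤ k ^ 12 := h12
      _ = (k ^ 3) ^ 4 := by ring
  exact (pow_le_pow_iff_left₀ (by positivity) (by positivity) (by norm_num)).1 h8

lemma two_le_card_of_sq_card_le_pow_three {F : Type*} [Field F] [Fintype F] {A : Finset F}
    (h : (Fintype.card F : ℝ) ^ 2 ≤ (#A : ℝ) ^ 3) : 2 ≤ #A := by
  have h' : Fintype.card F ^ 2 ≤ #A ^ 3 := by exact_mod_cast h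
  have hq : 2 ≤ Fintype.card F := Fintype.one_lt_card
  by_contra! hA
  have := Nat.pow_le_pow_left hq 2
  have := Nat.pow_le_pow_left (Nat.le_of_lt_succ hA) 3
  omega

theorem small_sumset_large_product_general (c₁ c₂ C : ℝ) (hc₁ : 0 < c₁) (hC : 0 < C) :
    ∃ c : ℝ, 0 < c ∧ ∀ (F : Type) [Field F] [Fintype F] [DecidableEq F] (A : Finset F),
      c₁ * (Fintype.card F : ℝ) ^ ((3 : ℝ) / 4) ≤ A.card →
      (A.card : ℝ) ≤ c₂ * (Fintype.card F : ℝ) ^ ((3 : ℝ) / 4) →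
      ((A + A).card : ℝ) ≤ C * A.card →
      c * (Fintype.card F : ℝ) ≤ ((A * A).card : ℝ) := by
  refine ⟨min (1 / (4 * C)) (c₁ ^ 12), by positivity, fun F _ _ _ A hlow _ hsum => ?_⟩
  set q : ℝ := (Fintype.card F : ℝ)
  have hq : 0 < q := by positivity
  -- `1 ≤ c₁ ^ 12 * q` is what makes `q ^ 2 ≤ |A| ^ 3`; below it `|A · A| ≥ 1` suffices.
  rcases lt_or_ge (c₁ ^ 12 * q) 1 with hsmall | hlarge
  · have hA : A.Nonempty := card_pos.1 <| by
      exact_mod_cast (by positivity : 0 < c₁ * q ^ ((3 : ℝ) / 4)).trans_le hlow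
    calc min (1 / (4 * C)) (c₁ ^ 12) * q ≤ c₁ ^ 12 * q := by gcongr; exact min_le_right _ _
      _ ≤ 1 := hsmall.le
      _ ≤ #(A * A) := by exact_mod_cast (hA.mul hA).card_pos
  · have hqk := sq_le_pow_three_of_mul_rpow_le hc₁ hq.le hlarge hlow
    have hk2 : (2 : ℝ) ≤ #A := by exact_mod_cast two_le_card_of_sq_card_le_pow_three hqk
    have hk' : (#A : ℝ) ≤ #(A.erase 0) + 1 := by
      have := pred_card_le_card_erase (s := A) (a := 0); exact_mod_cast (by omega)
    calc min (1 / (4 * C)) (c₁ ^ 12) * q ≤ 1 / (4 * C) * q := by gcongr; exact min_le_left _ _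
      _ = q / (4 * C) := by ring
      _ ≤ #(A * A) := le_of_incidence_bound hq hC hk2 hk' (by positivity) (by positivity) hsum hqk
          (card_erase_zero_mul_card_sq_le A)

theorem small_sumset_large_product (c₁ c₂ C : ℝ) (hc₁ : 0 < c₁) (hc₂ : 0 < c₂) (hC : 0 < C) :
    ∃ c : ℝ, 0 < c ∧ ∀ (F : Type) [Field F] [Fintype F] [DecidableEq F] (A : Finset F),
      c₁ * (Fintype.card F : ℝ) ^ ((3 : ℝ) / 4) ≤ A.card →
      (A.card : ℝ) ≤ c₂ * (Fintype.card F : ℝ) ^ ((3 : ℝ) / 4) →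
      ((A + A).card : ℝ) ≤ C * A.card →
      c * (Fintype.card F : ℝ) ≤ ((A * A).card : ℝ) :=
  small_sumset_large_product_general c₁ c₂ C hc₁ hC
end

section
/- Let A ⊆ F_q, c ∈ F_q*, and H_c = {(a,b) ∈ A × A : ab = c} with |H_c| ≥ 5. Then for distinct (a₁,a₂), (a₁',a₂') ∈ A × A, the translates (a₁,a₂) + H_c and (a₁',a₂') + H_c are not both contained in a common set of the form {x ∈ F_q² : (x₁−u)(x₂−v) = w} with w ≠ 0. -/
open Finset

lemma aux_three_points {F : Type} [Field F] (c : F) (hc : c ≠ 0)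
    (x₁ y₁ x₂ y₂ x₃ y₃ s t K : F)
    (h1 : x₁ * y₁ = c) (h2 : x₂ * y₂ = c) (h3 : x₃ * y₃ = c)
    (hx12 : x₁ ≠ x₂) (hx13 : x₁ ≠ x₃) (hx23 : x₂ ≠ x₃)
    (e1 : t * x₁ + s * y₁ = K) (e2 : t * x₂ + s * y₂ = K)
    (e3 : t * x₃ + s * y₃ = K) : s = 0 ∧ t = 0 := by
  have e1' : t * x₁ ^ 2 + s * c = K * x₁ := by linear_combination x₁ * e1 - s * h1
  have e2' : t * x₂ ^ 2 + s * c = K * x₂ := by linear_combination x₂ * e2 - s * h2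
  have e3' : t * x₃ ^ 2 + s * c = K * x₃ := by linear_combination x₃ * e3 - s * h3
  have h12 : t * (x₁ + x₂) = K :=
    mul_left_cancel₀ (sub_ne_zero.mpr hx12) (by linear_combination e1' - e2')
  have h13 : t * (x₁ + x₃) = K :=
    mul_left_cancel₀ (sub_ne_zero.mpr hx13) (by linear_combination e1' - e3')
  have ht : t = 0 := by
    have : t * (x₂ - x₃) = 0 := by linear_combination h12 - h13
    rcases mul_eq_zero.mp this with h | h
    · exact h
    · exact absurd (sub_eq_zero.mp h) hx23
  have hK : K = 0 := by
    have : K * (x₁ - x₂) = 0 := by linear_combination e2' - e1' + (x₁ ^ 2 - x₂ ^ 2) * ht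
    rcases mul_eq_zero.mp this with h | h
    · exact h
    · exact absurd (sub_eq_zero.mp h) hx12
  have hs : s = 0 := by
    have : s * c = 0 := by linear_combination e1' - x₁ ^ 2 * ht + x₁ * hK
    rcases mul_eq_zero.mp this with h | h
    · exact h
    · exact absurd h hc
  exact ⟨hs, ht⟩

theorem translated_hyperbolas_distinct (F : Type) [Field F] [Fintype F] [DecidableEq F]
    (A : Finset F) (c : F) (hc : c ≠ 0)
    (h5 : 5 ≤ ((A ×ˢ A).filter fun p => p.1 * p.2 = c).card)
    (a₁ a₂ a₁' a₂' : F) (ha₁ : a₁ ∈ A) (ha₂ : a₂ ∈ A) (ha₁' : a₁' ∈ A) (ha₂' : a₂' ∈ A)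
    (hne : (a₁, a₂) ≠ (a₁', a₂')) :
    ¬∃ (u v w : F), w ≠ 0 ∧
      (∀ p ∈ (A ×ˢ A).filter fun p => p.1 * p.2 = c,
        ((a₁ + p.1) - u) * ((a₂ + p.2) - v) = w) ∧
      (∀ p ∈ (A ×ˢ A).filter fun p => p.1 * p.2 = c,
        ((a₁' + p.1) - u) * ((a₂' + p.2) - v) = w) := by
  rintro ⟨u, v, w, hw, hA, hB⟩
  set H := (A ×ˢ A).filter fun p : F × F => p.1 * p.2 = c with hHdef
  -- extract three distinct points of H
  obtain ⟨p, hp⟩ := Finset.card_pos.mp (show 0 < H.card by omega)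
  obtain ⟨q, hq⟩ := Finset.card_pos.mp
    (show 0 < (H.erase p).card by rw [Finset.card_erase_of_mem hp]; omega)
  obtain ⟨r, hr⟩ := Finset.card_pos.mp
    (show 0 < ((H.erase p).erase q).card by
      rw [Finset.card_erase_of_mem hq, Finset.card_erase_of_mem hp]; omega)
  have hqH : q ∈ H := Finset.mem_of_mem_erase hq
  have hrH : r ∈ H := Finset.mem_of_mem_erase (Finset.mem_of_mem_erase hr)
  have hqp : q ≠ p := Finset.ne_of_mem_erase hq
  have hrq : r ≠ q := Finset.ne_of_mem_erase hr
  have hrp : r ≠ p := Finset.ne_of_mem_erase (Finset.mem_of_mem_erase hr)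
  have hmul : ∀ z ∈ H, z.1 * z.2 = c := fun z hz => (Finset.mem_filter.mp hz).2
  -- first coordinates are distinct
  have hfst : ∀ z ∈ H, ∀ z' ∈ H, z.1 = z'.1 → z = z' := by
    intro z hz z' hz' h
    have hz1 : z.1 ≠ 0 := by
      intro h0
      exact hc (by rw [← hmul z hz, h0, zero_mul])
    have h2 : z.2 = z'.2 := by
      have := (hmul z hz).trans (hmul z' hz').symm
      rw [h] at this
      exact mul_left_cancel₀ (h ▸ hz1) this
    exact Prod.ext h h2
  have hpq1 : p.1 ≠ q.1 := fun h => hqp (hfst q hqH p hp h.symm)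
  have hpr1 : p.1 ≠ r.1 := fun h => hrp (hfst r hrH p hp h.symm)
  have hqr1 : q.1 ≠ r.1 := fun h => hrq (hfst r hrH q hqH h.symm)
  -- derive linear relations and apply aux lemma for each translate
  have key : ∀ b₁ b₂ : F,
      (∀ z ∈ H, ((b₁ + z.1) - u) * ((b₂ + z.2) - v) = w) → b₁ = u ∧ b₂ = v := by
    intro b₁ b₂ hb
    have e : ∀ z ∈ H, (b₂ - v) * z.1 + (b₁ - u) * z.2 = w - c - (b₁ - u) * (b₂ - v) := by
      intro z hz
      linear_combination hb z hz - hmul z hz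
    obtain ⟨hs, ht⟩ := aux_three_points c hc p.1 p.2 q.1 q.2 r.1 r.2 (b₁ - u) (b₂ - v)
      (w - c - (b₁ - u) * (b₂ - v)) (hmul p hp) (hmul q hqH) (hmul r hrH)
      hpq1 hpr1 hqr1 (e p hp) (e q hqH) (e r hrH)
    exact ⟨sub_eq_zero.mp hs, sub_eq_zero.mp ht⟩
  obtain ⟨h1u, h2v⟩ := key a₁ a₂ hA
  obtain ⟨h1u', h2v'⟩ := key a₁' a₂' hB
  exact hne (by rw [h1u, h2v, h1u', h2v'])
end
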